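/- arXiv:math/0204056 — 2 statements merged into one kernel-verified Lean document; each statement's English description precedes it below -/
import Mathlib

section
/- Let ε: {0,...,p-1} → ℤ be the Alexander grading of the two-bridge knot K(p,q) (ε(0) chosen so that ε(i) + ε(p-1-i) = 0), and let n_k = #{i : ε(i) = k}. Then the polynomial Δ(t) = (-1)^{ε(0)} Σ_k n_k (-t)^k satisfies Δ(1) = ±1 and Δ(t) = Δ(t^{-1}) (as a Laurent polynomial), i.e. n_k counted with sign (-1)^k is symmetric: n_k = n_{-k} for all k. -/
/-!
Every increment of `ε` is `±1`, so the parity of `ε i` alternates with `i`: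
`(-1)^(ε i) = (-1)^i (-1)^(ε 0)`. Hence `(-1)^(ε 0) Δ(1)` is the alternating sum
`∑_{i<p} (-1)^i`, which is `1` because `p` is odd. The symmetry `n_k = n_{-k}` comes from
the reflection `i ↦ p - 1 - i`, which exchanges the level sets of `ε` at `k` and `-k`.
-/

open Finset

theorem negOnePow_eq_of_odd_sub {ε : ℕ → ℤ} {m : ℕ} (hstep : ∀ i < m, Odd (ε (i + 1) - ε i)) :
    ∀ i ≤ m, (ε i).negOnePow = (i : ℤ).negOnePow * (ε 0).negOnePow := by
  intro i hi
  induction i with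
  | zero => simp
  | succ i ih =>
    rw [show ε (i + 1) = (ε (i + 1) - ε i) + ε i by ring, Int.negOnePow_add,
      Int.negOnePow_odd _ (hstep i (by omega)), ih (by omega), Nat.cast_succ,
      Int.negOnePow_succ]
    simp

theorem neg_one_pow_natAbs_mul_sum_of_odd_sub {ε : ℕ → ℤ} {p : ℕ} (hp : Odd p)
    (hstep : ∀ i < p - 1, Odd (ε (i + 1) - ε i)) :
    (-1 : ℤ) ^ (ε 0).natAbs * ∑ i ∈ range p, (-1 : ℤ) ^ (ε i).natAbs = 1 := by
  have hsum : ∑ i ∈ range p, (-1 : ℤ) ^ (ε i).natAbs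
      = (∑ i ∈ range p, (-1 : ℤ) ^ i) * (-1 : ℤ) ^ (ε 0).natAbs := by
    rw [sum_mul]
    refine sum_congr rfl fun i hi => ?_
    have hi' : i ≤ p - 1 := by have := mem_range.mp hi; omega
    simp only [← Int.coe_negOnePow ℤ, ← Int.coe_negOnePow_natCast,
      negOnePow_eq_of_odd_sub hstep i hi', Units.val_mul, Int.cast_id]
  rw [hsum, neg_one_geom_sum, if_neg (Nat.not_even_iff_odd.mpr hp), one_mul, ← pow_add]
  exact Even.neg_one_pow ⟨_, rfl⟩

theorem card_filter_range_eq_neg {f : ℕ → ℤ} {p : ℕ} (hf : ∀ i < p, f i = -f (p - 1 - i))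
    (k : ℤ) : #{i ∈ range p | f i = k} = #{i ∈ range p | f i = -k} := by
  have hrefl : ∀ i < p, ∀ k, f i = k → f (p - 1 - i) = -k := fun i hi k hk => by
    rw [← hk, hf i hi, neg_neg]
  refine card_nbij' (fun i => p - 1 - i) (fun i => p - 1 - i) ?_ ?_ ?_ ?_
  · intro i hi
    simp only [coe_filter, mem_range, Set.mem_ofPred_eq] at hi ⊢
    exact ⟨by omega, hrefl i hi.1 k hi.2⟩
  · intro i hi
    simp only [coe_filter, mem_range, Set.mem_ofPred_eq] at hi ⊢
    exact ⟨by omega, neg_neg k ▸ hrefl i hi.1 (-k) hi.2⟩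
  all_goals
    intro i hi
    simp only [coe_filter, mem_range, Set.mem_ofPred_eq] at hi
    dsimp only
    omega

theorem stmt9_general (p q : ℕ) (hp : Odd p) (ε : ℕ → ℤ)
    (hεs : ∀ i, i < p - 1 → ε (i + 1) = ε i + (-1 : ℤ) ^ (i * q / p))
    (hnorm : ∀ i, i < p → ε i = -ε (p - 1 - i))
    (n : ℤ → ℕ)
    (hn : ∀ k, n k = ((Finset.range p).filter (fun i => ε i = k)).card) :
    ((-1 : ℤ) ^ (ε 0).natAbs * ∑ i ∈ Finset.range p, (-1 : ℤ) ^ (ε i).natAbs = 1 ∨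
     (-1 : ℤ) ^ (ε 0).natAbs * ∑ i ∈ Finset.range p, (-1 : ℤ) ^ (ε i).natAbs = -1) ∧
    ∀ k : ℤ, n k = n (-k) := by
  have hstep : ∀ i < p - 1, Odd (ε (i + 1) - ε i) := fun i hi => by
    rw [hεs i hi, add_sub_cancel_left]
    exact odd_neg_one.pow
  refine ⟨Or.inl (neg_one_pow_natAbs_mul_sum_of_odd_sub hp hstep), fun k => ?_⟩
  rw [hn k, hn (-k)]
  exact card_filter_range_eq_neg hnorm k

/-- For the Alexander grading `ε` of the two-bridge knot `K(p,q)`, normalized so that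
`ε i = -ε (p-1-i)`, the polynomial `Δ(t) = (-1)^{ε 0} ∑_k n_k (-t)^k` satisfies
`Δ(1) = ±1` (equivalently, the signed count `(-1)^{ε 0} ∑_i (-1)^{ε i} = ±1`), and the
counts `n_k = #{i : ε i = k}` are symmetric: `n_k = n_{-k}`. -/
theorem stmt9 (p q : ℕ) (hp : Odd p) (hq0 : 0 < q) (hqp : q < p)
    (hcop : Nat.Coprime p q) (ε : ℕ → ℤ)
    (hεs : ∀ i, i < p - 1 → ε (i + 1) = ε i + (-1 : ℤ) ^ (i * q / p))
    (hnorm : ∀ i, i < p → ε i = -ε (p - 1 - i))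
    (n : ℤ → ℕ)
    (hn : ∀ k, n k = ((Finset.range p).filter (fun i => ε i = k)).card) :
    ((-1 : ℤ) ^ (ε 0).natAbs * ∑ i ∈ Finset.range p, (-1 : ℤ) ^ (ε i).natAbs = 1 ∨
     (-1 : ℤ) ^ (ε 0).natAbs * ∑ i ∈ Finset.range p, (-1 : ℤ) ^ (ε i).natAbs = -1) ∧
    ∀ k : ℤ, n k = n (-k) :=
  stmt9_general p q hp ε hεs hnorm n hn
end

section
/- Suppose 0 → A → B → ℤ[u⁻¹] → 0 is a short exact sequence of graded ℤ[u]-modules where A is a finitely generated torsion ℤ[u]-module. If A has no elements in gradings less than that of 1 ∈ ℤ[u⁻¹], then the sequence splits: B ≅ A ⊕ ℤ[u⁻¹] as ℤ[u]-modules. -/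
open Polynomial

/-- Splitting lemma (Case 2 of Theorem 1): let `0 → A → B →g ℤ[u⁻¹] → 0` be a short
exact sequence of graded `ℤ[u]`-modules, where `ℤ[u⁻¹]` is modeled by a module `M`
with `ℤ`-basis `bM j` (standing for `u⁻ʲ`, of grading `d + 2j`) satisfying
`u • bM (j+1) = bM j`, `u • bM 0 = 0`, where `B` carries a grading `Bg` (an internal
direct sum of `ℤ`-submodules) with `u` of degree `-2` and `g` grading-preserving,
and where `A = ker g` is finitely generated over `ℤ` and has no elements in gradings
below `d` (the grading of `1 ∈ ℤ[u⁻¹]`).  Then the sequence splits: `g` admits a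
`ℤ[u]`-linear section, so `B ≅ A ⊕ ℤ[u⁻¹]`. -/
theorem stmt14
    (B M : Type) [AddCommGroup B] [Module (Polynomial ℤ) B]
    [AddCommGroup M] [Module (Polynomial ℤ) M]
    (bM : Module.Basis ℕ ℤ M)
    (hshift : ∀ j : ℕ, (X : Polynomial ℤ) • bM (j + 1) = bM j)
    (hb0 : (X : Polynomial ℤ) • bM 0 = (0 : M))
    (g : B →ₗ[Polynomial ℤ] M) (hgsurj : Function.Surjective g)
    (d : ℤ)
    (Bg : ℤ → Submodule ℤ B) (hinternal : DirectSum.IsInternal Bg)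
    (hdeg : ∀ (i : ℤ) (x : B), x ∈ Bg i → (X : Polynomial ℤ) • x ∈ Bg (i - 2))
    (hggraded : ∀ (i : ℤ) (x : B), x ∈ Bg i →
      g x ∈ Submodule.span ℤ
        (Set.range fun j : {j : ℕ // d + 2 * (j : ℤ) = i} => bM j))
    (hfin : Module.Finite ℤ (LinearMap.ker g))
    (hlow : ∀ i : ℤ, i < d → ∀ x ∈ Bg i, g x = 0 → x = 0) :
    ∃ s : M →ₗ[Polynomial ℤ] B, g ∘ₗ s = LinearMap.id := by
  classical
  haveI : DirectSum.Decomposition Bg := hinternal.chooseDecomposition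
  -- Step 1: a finite set `S` of gradings outside which the kernel of `g` vanishes.
  have hKfg : (Submodule.restrictScalars ℤ (LinearMap.ker g)).FG := by
    rw [← Module.Finite.iff_fg]
    exact hfin
  obtain ⟨F, hF⟩ := hKfg
  set S : Finset ℤ := F.sup (fun y => DFinsupp.support (DirectSum.decompose Bg y)) with hSdef
  have hker_le : Submodule.restrictScalars ℤ (LinearMap.ker g) ≤
      ⨆ i ∈ (S : Set ℤ), Bg i := by
    rw [← hF, Submodule.span_le]
    intro y hy
    have hsum := DirectSum.sum_support_decompose Bg y
    rw [← hsum]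
    refine Submodule.sum_mem _ (fun i hi => ?_)
    have hiS : i ∈ S :=
      Finset.le_sup (f := fun y => DFinsupp.support (DirectSum.decompose Bg y)) hy hi
    exact Submodule.mem_iSup_of_mem i
      (Submodule.mem_iSup_of_mem hiS (DirectSum.decompose Bg y i).2)
  have hS : ∀ i ∉ S, ∀ x ∈ Bg i, g x = 0 → x = 0 := by
    intro i hiS x hx hgx
    have hxK : x ∈ Submodule.restrictScalars ℤ (LinearMap.ker g) := hgx
    have hx2 : x ∈ ⨆ j ≠ i, Bg j := by
      refine (iSup₂_le_iff.mpr ?_ : (⨆ j ∈ (S : Set ℤ), Bg j) ≤ ⨆ j ≠ i, Bg j)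
        (hker_le hxK)
      intro j hj
      have hji : j ≠ i := fun h => hiS (h ▸ hj)
      exact le_iSup₂ (f := fun j (_ : j ≠ i) => Bg j) j hji
    exact (Submodule.mem_bot ℤ).mp
      ((hinternal.submodule_iSupIndep i).le_bot (Submodule.mem_inf.mpr ⟨hx, hx2⟩))
  -- Step 2: a bound `N` with `d + 2j ∉ S` for `j ≥ N`.
  obtain ⟨N, hN⟩ : ∃ N : ℕ, ∀ j : ℕ, N ≤ j → (d + 2 * (j : ℤ)) ∉ S := by
    refine ⟨(S.sup fun i => (i - d).toNat) + 1, fun j hj hmem => ?_⟩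
    have h1 : ((d + 2 * (j : ℤ)) - d).toNat ≤ S.sup fun i => (i - d).toNat :=
      Finset.le_sup (f := fun i => (i - d).toNat) hmem
    have h2 : ((d + 2 * (j : ℤ)) - d).toNat = 2 * j := by omega
    omega
  -- Step 3: homogeneous lifts of the basis vectors.
  have hq : ∀ (j : ℕ) (i : ℤ), ∀ y ∈ Submodule.span ℤ
      (Set.range fun k : {k : ℕ // d + 2 * (k : ℤ) = i} => bM k),
      (bM.constr ℤ (fun k => if k = j then bM j else 0)) y =
        if i = d + 2 * (j : ℤ) then y else 0 := by
    intro j i y hy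
    induction hy using Submodule.span_induction with
    | mem z hz =>
      obtain ⟨⟨k, hk⟩, rfl⟩ := hz
      rw [Module.Basis.constr_basis]
      by_cases hij : i = d + 2 * (j : ℤ)
      · have : k = j := by omega
        subst this
        simp [hij]
      · have : k ≠ j := by
          intro h; subst h; exact hij hk.symm
        simp [hij, this]
    | zero => simp
    | add z w _ _ hz hw =>
      rw [map_add, hz, hw]
      by_cases hij : i = d + 2 * (j : ℤ) <;> simp [hij]
    | smul a z _ hz =>
      rw [map_smul, hz]
      by_cases hij : i = d + 2 * (j : ℤ) <;> simp [hij]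
  have hc : ∀ j : ℕ, ∃ c : B, c ∈ Bg (d + 2 * (j : ℤ)) ∧ g c = bM j := by
    intro j
    obtain ⟨x, hx⟩ := hgsurj (bM j)
    set q : M →ₗ[ℤ] M := bM.constr ℤ (fun k => if k = j then bM j else 0) with hqdef
    refine ⟨(DirectSum.decompose Bg x (d + 2 * (j : ℤ)) : B), SetLike.coe_mem _, ?_⟩
    have hqx : q (g x) = bM j := by
      rw [hx, hqdef, Module.Basis.constr_basis]
      simp
    have hsum := DirectSum.sum_support_decompose Bg x
    rw [← hsum] at hqx
    simp only [map_sum] at hqx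
    have hterm : ∀ i ∈ DFinsupp.support (DirectSum.decompose Bg x),
        q (g (DirectSum.decompose Bg x i : B)) =
          if i = d + 2 * (j : ℤ) then g (DirectSum.decompose Bg x i : B) else 0 := by
      intro i _
      exact hq j i _ (hggraded i _ (SetLike.coe_mem _))
    rw [Finset.sum_congr rfl hterm, Finset.sum_ite_eq'] at hqx
    by_cases hmem : d + 2 * (j : ℤ) ∈ DFinsupp.support (DirectSum.decompose Bg x)
    · rw [if_pos hmem] at hqx
      exact hqx
    · rw [if_neg hmem] at hqx
      exact absurd hqx.symm (bM.ne_zero j)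
  choose c hcmem hgc using hc
  -- Step 4: for `k ≥ N`, the lifts are compatible with the `X`-action.
  have hstep : ∀ k : ℕ, N ≤ k → (X : Polynomial ℤ) • c (k + 1) = c k := by
    intro k hk
    have hmem : (X : Polynomial ℤ) • c (k + 1) - c k ∈ Bg (d + 2 * (k : ℤ)) := by
      have h1 := hdeg _ _ (hcmem (k + 1))
      have h2 : d + 2 * ((k + 1 : ℕ) : ℤ) - 2 = d + 2 * (k : ℤ) := by push_cast; ring
      rw [h2] at h1
      exact Submodule.sub_mem _ h1 (hcmem k)
    have hg0 : g ((X : Polynomial ℤ) • c (k + 1) - c k) = 0 := by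
      rw [map_sub, map_smul, hgc, hgc, hshift, sub_self]
    exact sub_eq_zero.mp (hS _ (hN k hk) _ hmem hg0)
  -- Step 5: the section on basis vectors.
  set b : ℕ → B := fun j => ((X : Polynomial ℤ) ^ N) • c (j + N) with hbdef
  have hXpow : ∀ (n j : ℕ), ((X : Polynomial ℤ) ^ n) • bM (j + n) = bM j := by
    intro n
    induction n with
    | zero => intro j; simp
    | succ n ih =>
      intro j
      rw [show j + (n + 1) = (j + n) + 1 from rfl, pow_succ, mul_smul, hshift (j + n), ih j]
  have hgb : ∀ j : ℕ, g (b j) = bM j := by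
    intro j
    rw [hbdef]
    simp only [map_smul, hgc]
    exact hXpow N j
  have hXb : ∀ j : ℕ, (X : Polynomial ℤ) • b (j + 1) = b j := by
    intro j
    have e : j + 1 + N = (j + N) + 1 := by omega
    simp only [hbdef, e]
    rw [smul_comm, hstep (j + N) (Nat.le_add_left N j)]
  have hpowdeg : ∀ (n : ℕ) (i : ℤ) (x : B), x ∈ Bg i →
      ((X : Polynomial ℤ) ^ n) • x ∈ Bg (i - 2 * n) := by
    intro n
    induction n with
    | zero => intro i x hx; simpa using hx
    | succ n ih =>
      intro i x hx
      have h1 := hdeg _ _ (ih i x hx)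
      have h2 : ((X : Polynomial ℤ) ^ (n + 1)) • x =
          (X : Polynomial ℤ) • (((X : Polynomial ℤ) ^ n) • x) := by
        rw [pow_succ', mul_smul]
      rw [h2]
      have h3 : i - 2 * (n : ℤ) - 2 = i - 2 * ((n : ℕ) + 1 : ℕ) := by push_cast; ring
      rw [← h3]
      exact h1
  have hXb0 : (X : Polynomial ℤ) • b 0 = 0 := by
    have h1 : b 0 ∈ Bg d := by
      have h := hpowdeg N _ _ (hcmem (0 + N))
      have e : d + 2 * ((0 + N : ℕ) : ℤ) - 2 * (N : ℕ) = d := by push_cast; ring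
      rw [e] at h
      exact h
    have hg0 : g ((X : Polynomial ℤ) • b 0) = 0 := by
      rw [map_smul, hgb, hb0]
    exact hlow _ (by omega) _ (hdeg _ _ h1) hg0
  -- Step 6: build the `ℤ`-linear section and upgrade it to `ℤ[X]`-linearity.
  set s0 : M →ₗ[ℤ] B := bM.constr ℤ b with hs0def
  have hs0b : ∀ j : ℕ, s0 (bM j) = b j := fun j => bM.constr_basis ℤ b j
  have hX : ∀ m : M, s0 ((X : Polynomial ℤ) • m) = (X : Polynomial ℤ) • s0 m := by
    intro m
    have hm : m ∈ Submodule.span ℤ (Set.range bM) := by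
      rw [bM.span_eq]; trivial
    induction hm using Submodule.span_induction with
    | mem z hz =>
      obtain ⟨j, rfl⟩ := hz
      cases j with
      | zero => rw [hb0, map_zero, hs0b, hXb0]
      | succ j => rw [hshift, hs0b, hs0b, hXb]
    | zero => simp
    | add z w _ _ hz hw => rw [smul_add, map_add, hz, hw, map_add, smul_add]
    | smul a z _ hz =>
      rw [smul_comm, map_smul, hz, map_smul, smul_comm]
  have hXn : ∀ (n : ℕ) (m : M), s0 (((X : Polynomial ℤ) ^ n) • m) =
      ((X : Polynomial ℤ) ^ n) • s0 m := by
    intro n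
    induction n with
    | zero => intro m; simp
    | succ n ih =>
      intro m
      rw [pow_succ, mul_smul, ih, hX, mul_smul]
  have hsmul : ∀ (p : Polynomial ℤ) (m : M), s0 (p • m) = p • s0 m := by
    intro p m
    induction p using Polynomial.induction_on' with
    | add p q hp hq => rw [add_smul, map_add, hp, hq, add_smul]
    | monomial n a =>
      rw [← C_mul_X_pow_eq_monomial, mul_comm, mul_smul, mul_smul]
      have hC : ∀ y : M, (C a : Polynomial ℤ) • y = a • y := fun y => by
        rw [Polynomial.C_eq_algebraMap, algebraMap_smul]
      have hC' : ∀ y : B, (C a : Polynomial ℤ) • y = a • y := fun y => by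
        rw [Polynomial.C_eq_algebraMap, algebraMap_smul]
      rw [hC, hXn, map_smul, hC']
  refine ⟨LinearMap.mk ⟨fun m => s0 m, fun x y => map_add s0 x y⟩ (fun r x => hsmul r x), ?_⟩
  apply LinearMap.ext
  intro m
  have hm : m ∈ Submodule.span ℤ (Set.range bM) := by
    rw [bM.span_eq]; trivial
  induction hm using Submodule.span_induction with
  | mem z hz =>
    obtain ⟨j, rfl⟩ := hz
    show g (s0 (bM j)) = bM j
    rw [hs0b, hgb]
  | zero => simp
  | add z w _ _ hz hw => rw [map_add, hz, hw, map_add]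
  | smul a z _ hz =>
    rw [map_zsmul, hz, map_zsmul]
end
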